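/- Consider the quasi-split stretched coupled-task instance with X = {x_1, …, x_6} of stretch factor 1 and Y = {y_1, y_2, y_3} of stretch factor 4, where G_X has exactly the edges {x_1,x_2}, {x_3,x_4}, {x_5,x_6}, and the arcs from X to Y are exactly x_1→y_1, x_2→y_1, x_3→y_2, x_4→y_2, x_5→y_3, x_6→y_3, x_2→y_3, x_3→y_1, x_5→y_2. Then: (i) the minimum makespan over all feasible schedules equals 36 (nest the pair {x_1,x_2} in y_1, {x_3,x_4} in y_2 and {x_5,x_6} in y_3); (ii) the assignment x_2→y_3, x_3→y_1, x_5→y_2 is a nesting assignment of maximum cardinality (each Y-task has capacity ⌊4/3⌋ = 1), the remaining tasks {x_1, x_4, x_6} form an independent set in G_X, and the corresponding schedule (Y-tasks with nested X-tasks, then matched pairs, then singletons) has makespan 3·12 + 3·3 = 45 = (5/4)·36. -/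
import Mathlib


/-!  Coupled-task scheduling with compatibility constraints. -/

/-- A coupled-task `(a, L, b)`: a first sub-task of processing time `a`,
an idle period of length `L`, then a second sub-task of processing time `b`. -/
structure CTask where
  a : ℝ
  L : ℝ
  b : ℝ

namespace CTask

/-- The set of time instants occupied by the task when started at time `s`. -/
def occupied (t : CTask) (s : ℝ) : Set ℝ :=
  Set.Ico s (s + t.a) ∪ Set.Ico (s + t.a + t.L) (s + t.a + t.L + t.b)

/-- The idle window of the task when started at time `s`. -/
def idleWindow (t : CTask) (s : ℝ) : Set ℝ :=
  Set.Ico (s + t.a) (s + t.a + t.L)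

/-- The span of the task when started at time `s`. -/
def span (t : CTask) (s : ℝ) : Set ℝ :=
  Set.Ico s (s + t.a + t.L + t.b)

/-- Total duration `a + L + b` of a coupled-task. -/
def dur (t : CTask) : ℝ := t.a + t.L + t.b

/-- All three components of the task are positive. -/
def Positive (t : CTask) : Prop := 0 < t.a ∧ 0 < t.L ∧ 0 < t.b

end CTask

/-- The stretched coupled-task with stretch factor `α`, i.e. `(α, α, α)`. -/
def stretched (α : ℝ) : CTask := ⟨α, α, α⟩

/-- A scheduling instance: a coupled-task for each index, together with a
compatibility relation.  `compat t' t` means that the compatibility graph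
contains the arc `(t', t)` (so `t'` may be executed during the idle window of
`t`); an undirected edge `{t, t'}` is modelled by `compat t' t ∧ compat t t'`. -/
structure SchedInstance (ι : Type*) where
  task : ι → CTask
  compat : ι → ι → Prop

namespace SchedInstance

variable {ι : Type*}

/-- A schedule `σ` (assigning a start time to every task) is feasible if all
start times are nonnegative, occupied intervals of distinct tasks are pairwise
disjoint, and whenever an occupied interval of `t'` meets the idle window of
`t`, the compatibility graph contains the arc (or edge) from `t'` to `t`. -/
def Feasible (I : SchedInstance ι) (σ : ι → ℝ) : Prop :=
  (∀ t, 0 ≤ σ t) ∧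
  (∀ t t', t ≠ t' →
    Disjoint ((I.task t).occupied (σ t)) ((I.task t').occupied (σ t'))) ∧
  (∀ t t', t ≠ t' →
    (((I.task t').occupied (σ t')) ∩ ((I.task t).idleWindow (σ t))).Nonempty →
      I.compat t' t)

/-- Completion time of task `t` under schedule `σ`. -/
def endTime (I : SchedInstance ι) (σ : ι → ℝ) (t : ι) : ℝ :=
  σ t + (I.task t).dur

/-- The makespan of `σ` is at most `C`. -/
def MakespanLE (I : SchedInstance ι) (σ : ι → ℝ) (C : ℝ) : Prop :=
  ∀ t, I.endTime σ t ≤ C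

/-- The makespan of `σ` is exactly `C`. -/
def MakespanEq (I : SchedInstance ι) (σ : ι → ℝ) (C : ℝ) : Prop :=
  I.MakespanLE σ C ∧ ∃ t, I.endTime σ t = C

end SchedInstance

/-- A quasi-split stretched coupled-task instance: the compatibility graph
splits into an undirected graph `GX` on the `X`-tasks, an independent set of
`Y`-tasks, and arcs `R` oriented from `X` to `Y`; every `X`-task has stretch
factor `1` and every `Y`-task `y` has stretch factor `α y ≥ 3`. -/
structure QuasiSplit (ιX ιY : Type*) where
  GX : SimpleGraph ιX
  R : ιX → ιY → Prop
  α : ιY → ℝ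
  hα : ∀ y, 3 ≤ α y

namespace QuasiSplit

variable {ιX ιY : Type*}

/-- The scheduling instance determined by a quasi-split instance. -/
def inst (Q : QuasiSplit ιX ιY) : SchedInstance (ιX ⊕ ιY) where
  task := fun i => match i with
    | .inl _ => stretched 1
    | .inr y => stretched (Q.α y)
  compat := fun i j => match i, j with
    | .inl x, .inl x' => Q.GX.Adj x x'
    | .inl x, .inr y => Q.R x y
    | _, _ => False

/-- A nesting assignment with domain `F`: every `x ∈ F` is assigned a `Y`-task
`g x` with `(x, g x)` an arc of the compatibility graph, and each `Y`-task `y`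
receives at most `⌊α y / 3⌋` tasks. -/
def IsNesting [DecidableEq ιY] (Q : QuasiSplit ιX ιY) (F : Finset ιX)
    (g : ιX → ιY) : Prop :=
  (∀ x ∈ F, Q.R x (g x)) ∧
  ∀ y : ιY, (F.filter fun x => g x = y).card ≤ ⌊Q.α y / 3⌋₊

/-- A matching of `GX` on the vertex set `X \ F`: a set of edges of `GX`
avoiding `F`, with pairwise distinct endpoints. -/
def IsMatchingOn (Q : QuasiSplit ιX ιY) (F : Finset ιX)
    (M : Finset (ιX × ιX)) : Prop :=
  (∀ p ∈ M, Q.GX.Adj p.1 p.2 ∧ p.1 ∉ F ∧ p.2 ∉ F) ∧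
  ∀ p ∈ M, ∀ q ∈ M, p ≠ q →
    p.1 ≠ q.1 ∧ p.1 ≠ q.2 ∧ p.2 ≠ q.1 ∧ p.2 ≠ q.2

end QuasiSplit

/-- The graph `G_X` of the tightness example: exactly the edges
`{x₁,x₂}, {x₃,x₄}, {x₅,x₆}` (0-indexed: `{0,1}, {2,3}, {4,5}`). -/
def GX15 : SimpleGraph (Fin 6) :=
  SimpleGraph.fromRel (fun a b =>
    (a = 0 ∧ b = 1) ∨ (a = 2 ∧ b = 3) ∨ (a = 4 ∧ b = 5))

/-- The arcs from `X` to `Y` of the tightness example (0-indexed):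
`x₁→y₁, x₂→y₁, x₃→y₂, x₄→y₂, x₅→y₃, x₆→y₃, x₂→y₃, x₃→y₁, x₅→y₂`. -/
def R15 : Fin 6 → Fin 3 → Prop := fun x y =>
  (x = 0 ∧ y = 0) ∨ (x = 1 ∧ y = 0) ∨ (x = 2 ∧ y = 1) ∨ (x = 3 ∧ y = 1) ∨
  (x = 4 ∧ y = 2) ∨ (x = 5 ∧ y = 2) ∨ (x = 1 ∧ y = 2) ∨ (x = 2 ∧ y = 0) ∨
  (x = 4 ∧ y = 1)

/-- The tightness instance: six `X`-tasks of stretch factor `1` and three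
`Y`-tasks of stretch factor `4`. -/
def Q15 : QuasiSplit (Fin 6) (Fin 3) where
  GX := GX15
  R := R15
  α := fun _ => 4
  hα := fun _ => by norm_num

/-- Domain of the nesting assignment of the heuristic: `{x₂, x₃, x₅}`. -/
def F15 : Finset (Fin 6) := {1, 2, 4}

/-- The nesting assignment `x₂→y₃, x₃→y₁, x₅→y₂`. -/
def g15 : Fin 6 → Fin 3 := fun x => if x = 1 then 2 else if x = 2 then 0 else 1


open MeasureTheory in
lemma s15_vol_occ (α s : ℝ) (hα : 0 ≤ α) :
    volume ((stretched α).occupied s) = ENNReal.ofReal α + ENNReal.ofReal α := by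
  have hd : Disjoint (Set.Ico s (s + α)) (Set.Ico (s + α + α) (s + α + α + α)) := by
    rw [Set.Ico_disjoint_Ico]
    exact min_le_of_left_le (le_max_of_le_right (by linarith))
  show volume (Set.Ico s (s + α) ∪ Set.Ico (s + α + α) (s + α + α + α)) = _
  rw [measure_union hd measurableSet_Ico, Real.volume_Ico, Real.volume_Ico]
  congr 1 <;> ring_nf

def σ36 : Fin 6 ⊕ Fin 3 → ℝ
  | .inl x => ![4, 5, 16, 17, 28, 29] x
  | .inr y => 12 * y

def σ45 : Fin 6 ⊕ Fin 3 → ℝ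
  | .inl x => ![36, 28, 4, 39, 16, 42] x
  | .inr y => 12 * y

set_option maxHeartbeats 2000000 in
lemma s15_feas36 : Q15.inst.Feasible σ36 := by
  refine ⟨?_, ?_, ?_⟩
  · rintro (x | y)
    · fin_cases x <;> norm_num [σ36]
    · fin_cases y <;> norm_num [σ36]
  · rintro (x | y) (x' | y') hne
    · fin_cases x <;> fin_cases x' <;>
        first
        | exact absurd rfl hne
        | norm_num [σ36, Q15, QuasiSplit.inst, CTask.occupied, stretched,
            Set.disjoint_union_left, Set.disjoint_union_right, Set.Ico_disjoint_Ico,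
            min_le_iff, le_max_iff]
    · fin_cases x <;> fin_cases y' <;>
        norm_num [σ36, Q15, QuasiSplit.inst, CTask.occupied, stretched,
            Set.disjoint_union_left, Set.disjoint_union_right, Set.Ico_disjoint_Ico,
            min_le_iff, le_max_iff]
    · fin_cases y <;> fin_cases x' <;>
        norm_num [σ36, Q15, QuasiSplit.inst, CTask.occupied, stretched,
            Set.disjoint_union_left, Set.disjoint_union_right, Set.Ico_disjoint_Ico,
            min_le_iff, le_max_iff]
    · fin_cases y <;> fin_cases y' <;>
        first
        | exact absurd rfl hne
        | norm_num [σ36, Q15, QuasiSplit.inst, CTask.occupied, stretched,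
            Set.disjoint_union_left, Set.disjoint_union_right, Set.Ico_disjoint_Ico,
            min_le_iff, le_max_iff]
  · rintro (x | y) (x' | y') hne
    all_goals try fin_cases x
    all_goals try fin_cases y
    all_goals try fin_cases x'
    all_goals try fin_cases y'
    all_goals
      first
      | exact absurd rfl hne
      | (intro _; simp [Q15, QuasiSplit.inst, GX15, R15]; done)
      | (rintro ⟨z, hz1, hz2⟩;
         simp only [σ36, Q15, QuasiSplit.inst, CTask.occupied, CTask.idleWindow,
           stretched, Set.mem_union, Set.mem_Ico, Matrix.cons_val_zero, Matrix.cons_val_one,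
           Matrix.head_cons] at hz1 hz2;
         norm_num at hz1 hz2;
         rcases hz1 with ⟨h, h'⟩ | ⟨h, h'⟩ <;> linarith [hz2.1, hz2.2])

set_option maxHeartbeats 2000000 in
lemma s15_feas45 : Q15.inst.Feasible σ45 := by
  refine ⟨?_, ?_, ?_⟩
  · rintro (x | y)
    · fin_cases x <;> norm_num [σ45]
    · fin_cases y <;> norm_num [σ45]
  · rintro (x | y) (x' | y') hne
    · fin_cases x <;> fin_cases x' <;>
        first
        | exact absurd rfl hne
        | norm_num [σ45, Q15, QuasiSplit.inst, CTask.occupied, stretched,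
            Set.disjoint_union_left, Set.disjoint_union_right, Set.Ico_disjoint_Ico,
            min_le_iff, le_max_iff]
    · fin_cases x <;> fin_cases y' <;>
        norm_num [σ45, Q15, QuasiSplit.inst, CTask.occupied, stretched,
            Set.disjoint_union_left, Set.disjoint_union_right, Set.Ico_disjoint_Ico,
            min_le_iff, le_max_iff]
    · fin_cases y <;> fin_cases x' <;>
        norm_num [σ45, Q15, QuasiSplit.inst, CTask.occupied, stretched,
            Set.disjoint_union_left, Set.disjoint_union_right, Set.Ico_disjoint_Ico,
            min_le_iff, le_max_iff]
    · fin_cases y <;> fin_cases y' <;>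
        first
        | exact absurd rfl hne
        | norm_num [σ45, Q15, QuasiSplit.inst, CTask.occupied, stretched,
            Set.disjoint_union_left, Set.disjoint_union_right, Set.Ico_disjoint_Ico,
            min_le_iff, le_max_iff]
  · rintro (x | y) (x' | y') hne
    all_goals try fin_cases x
    all_goals try fin_cases y
    all_goals try fin_cases x'
    all_goals try fin_cases y'
    all_goals
      first
      | exact absurd rfl hne
      | (intro _; simp [Q15, QuasiSplit.inst, GX15, R15]; done)
      | (rintro ⟨z, hz1, hz2⟩;
         simp only [σ45, Q15, QuasiSplit.inst, CTask.occupied, CTask.idleWindow,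
           stretched, Set.mem_union, Set.mem_Ico, Matrix.cons_val_zero, Matrix.cons_val_one,
           Matrix.head_cons] at hz1 hz2;
         norm_num at hz1 hz2;
         rcases hz1 with ⟨h, h'⟩ | ⟨h, h'⟩ <;> linarith [hz2.1, hz2.2])

open MeasureTheory in
lemma s15_lower (σ : Fin 6 ⊕ Fin 3 → ℝ) (C : ℝ) (hF : Q15.inst.Feasible σ)
    (hM : Q15.inst.MakespanLE σ C) : 36 ≤ C := by
  obtain ⟨hpos, hdisj, -⟩ := hF
  have hC0 : 0 ≤ C := by
    have h0 := hM (Sum.inl 0)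
    have h0' := hpos (Sum.inl 0)
    simp only [SchedInstance.endTime, CTask.dur, Q15, QuasiSplit.inst, stretched] at h0
    linarith
  have hsub : ∀ t, ((Q15.inst.task t).occupied (σ t)) ⊆ Set.Ico 0 C := by
    rintro t z hz
    have h1 := hpos t
    have h2 := hM t
    rcases t with x | y <;>
    · simp only [Q15, QuasiSplit.inst, stretched, CTask.occupied, CTask.dur,
        SchedInstance.endTime, Set.mem_union, Set.mem_Ico] at hz h2 ⊢
      constructor
      · rcases hz with ⟨h, _⟩ | ⟨h, _⟩ <;> linarith
      · rcases hz with ⟨_, h⟩ | ⟨_, h⟩ <;> linarith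
  have hmeas : ∀ t : Fin 6 ⊕ Fin 3, MeasurableSet ((Q15.inst.task t).occupied (σ t)) :=
    fun t => measurableSet_Ico.union measurableSet_Ico
  have hpd : Set.PairwiseDisjoint ((Finset.univ : Finset (Fin 6 ⊕ Fin 3)) : Set (Fin 6 ⊕ Fin 3))
      (fun t => (Q15.inst.task t).occupied (σ t)) := fun t _ t' _ h => hdisj t t' h
  have hunion := measure_biUnion_finset (μ := volume) hpd (fun t _ => hmeas t)
  have e1 : ∀ x : Fin 6,
      volume ((Q15.inst.task (Sum.inl x)).occupied (σ (Sum.inl x))) = 2 := by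
    intro x
    have := s15_vol_occ 1 (σ (Sum.inl x)) (by norm_num)
    rw [show Q15.inst.task (Sum.inl x) = stretched 1 from rfl, this]
    norm_num
  have e2 : ∀ y : Fin 3,
      volume ((Q15.inst.task (Sum.inr y)).occupied (σ (Sum.inr y))) = 8 := by
    intro y
    have := s15_vol_occ 4 (σ (Sum.inr y)) (by norm_num)
    rw [show Q15.inst.task (Sum.inr y) = stretched 4 from rfl, this]
    rw [show ((4:ℝ)) = ((4:ℝ)) from rfl]
    rw [ENNReal.ofReal_ofNat]
    norm_num
  have hsum : (∑ t : Fin 6 ⊕ Fin 3, volume ((Q15.inst.task t).occupied (σ t)))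
      = ENNReal.ofReal 36 := by
    rw [Fintype.sum_sum_type]
    simp only [e1, e2, Finset.sum_const, Finset.card_univ]
    rw [show ENNReal.ofReal 36 = 36 from by rw [ENNReal.ofReal_ofNat]]
    simp [Fintype.card_fin]
    norm_num
  have hle : ENNReal.ofReal 36 ≤ ENNReal.ofReal C := by
    rw [← hsum, ← hunion]
    calc volume (⋃ t ∈ (Finset.univ : Finset (Fin 6 ⊕ Fin 3)),
            (Q15.inst.task t).occupied (σ t))
        ≤ volume (Set.Ico (0:ℝ) C) := by
          apply measure_mono
          intro z hz
          simp only [Set.mem_iUnion] at hz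
          obtain ⟨t, _, hz⟩ := hz
          exact hsub t hz
      _ = ENNReal.ofReal (C - 0) := Real.volume_Ico
      _ = ENNReal.ofReal C := by rw [sub_zero]
  exact (ENNReal.ofReal_le_ofReal_iff hC0).mp hle

lemma s15_floor : ⌊(4 : ℝ) / 3⌋₊ = 1 := by
  rw [Nat.floor_eq_iff (by norm_num)]
  norm_num
/-- in the tightness example, (i) the minimum makespan over all
feasible schedules equals `36`; (ii) `g15` (with domain `F15`) is a nesting
assignment of maximum cardinality (each `Y`-task having capacity
`⌊4/3⌋ = 1`), the remaining tasks `{x₁, x₄, x₆}` form an independent set in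
`G_X`, and the corresponding heuristic schedule has makespan
`3·12 + 3·3 = 45 = (5/4)·36`. -/
theorem stmt15 :
    -- (i) the optimal makespan is 36
    ((∃ σ : Fin 6 ⊕ Fin 3 → ℝ, Q15.inst.Feasible σ ∧ Q15.inst.MakespanEq σ 36) ∧
     (∀ (σ : Fin 6 ⊕ Fin 3 → ℝ) (C : ℝ),
        Q15.inst.Feasible σ → Q15.inst.MakespanLE σ C → 36 ≤ C)) ∧
    -- (ii) the heuristic
    (Q15.IsNesting F15 g15 ∧
     ⌊(4 : ℝ) / 3⌋₊ = 1 ∧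
     (∀ (F' : Finset (Fin 6)) (g' : Fin 6 → Fin 3),
        Q15.IsNesting F' g' → F'.card ≤ F15.card) ∧
     (∀ a ∈ ({0, 3, 5} : Finset (Fin 6)), ∀ b ∈ ({0, 3, 5} : Finset (Fin 6)),
        ¬ Q15.GX.Adj a b) ∧
     (∃ σ : Fin 6 ⊕ Fin 3 → ℝ, Q15.inst.Feasible σ ∧ Q15.inst.MakespanEq σ 45) ∧
     (3 * 12 + 3 * 3 : ℝ) = 45 ∧ (45 : ℝ) = 5 / 4 * 36) := by
  have hα4 : ∀ y : Fin 3, ⌊Q15.α y / 3⌋₊ = 1 := by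
    intro y
    rw [show Q15.α y = 4 from rfl]
    exact s15_floor
  refine ⟨⟨⟨σ36, s15_feas36, ?_, ⟨Sum.inr 2, ?_⟩⟩, fun σ C hF hM => s15_lower σ C hF hM⟩,
    ⟨?_, ?_⟩, s15_floor, ?_, ?_, ⟨σ45, s15_feas45, ?_, ⟨Sum.inl 5, ?_⟩⟩,
    by norm_num, by norm_num⟩
  · rintro (x | y)
    · fin_cases x <;>
        norm_num [SchedInstance.endTime, CTask.dur, Q15, QuasiSplit.inst, stretched, σ36]
    · fin_cases y <;>
        norm_num [SchedInstance.endTime, CTask.dur, Q15, QuasiSplit.inst, stretched, σ36]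
  · norm_num [SchedInstance.endTime, CTask.dur, Q15, QuasiSplit.inst, stretched, σ36]
  · intro x hx
    fin_cases hx <;> simp [Q15, g15, R15, F15]
  · intro y
    rw [hα4 y]
    fin_cases y <;> decide
  · intro F' g' hN
    have hcard : F15.card = 3 := by decide
    rw [hcard, Finset.card_eq_sum_card_fiberwise
      (fun x (_ : x ∈ F') => Finset.mem_univ (g' x))]
    calc ∑ y ∈ Finset.univ, (F'.filter fun x => g' x = y).card
        ≤ ∑ _y : Fin 3, 1 := Finset.sum_le_sum fun y _ => by
            have h := hN.2 y; rwa [hα4 y] at h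
      _ = 3 := by simp
  · intro a ha b hb
    fin_cases ha <;> fin_cases hb <;> simp [Q15, GX15]
  · rintro (x | y)
    · fin_cases x <;>
        norm_num [SchedInstance.endTime, CTask.dur, Q15, QuasiSplit.inst, stretched, σ45]
    · fin_cases y <;>
        norm_num [SchedInstance.endTime, CTask.dur, Q15, QuasiSplit.inst, stretched, σ45]
  · norm_num [SchedInstance.endTime, CTask.dur, Q15, QuasiSplit.inst, stretched, σ45,
      show ![(36:ℝ), 28, 4, 39, 16, 42] (5 : Fin 6) = 42 from rfl]
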